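/- Let h ∈ ℝ[x₁,…,x_n], κ_h > 0, β⁻ < 0. Suppose there exist polynomials μ₀, μ₁, …, μₘ, each SOS, such that (1+μ₀(x))·(β⁻−h(x)) + Σ_{i=1}^m μᵢ(x)·(ḣ(x,uⁱ)+κ_h h(x)) is SOS. Then for every x ∈ ℝⁿ with h(x) > β⁻, there exists u ∈ 𝒰 such that ḣ(x,u) > −κ_h h(x). -/

import Mathlib

open MvPolynomial Finset

/-- A polynomial is a sum of squares. -/
def IsSOS {n : ℕ} (p : MvPolynomial (Fin n) ℝ) : Prop :=
  ∃ (N : ℕ) (q : Fin N → MvPolynomial (Fin n) ℝ), p = ∑ i, (q i) ^ 2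

/-- `ḣ(x,u) = ∇h(x)ᵀ(f(x) + g(x)u)` as a polynomial in `x`, for a fixed input vector `u`. -/
noncomputable def HdotPoly {n nu : ℕ} (h : MvPolynomial (Fin n) ℝ)
    (f : Fin n → MvPolynomial (Fin n) ℝ) (g : Fin n → Fin nu → MvPolynomial (Fin n) ℝ)
    (u : Fin nu → ℝ) : MvPolynomial (Fin n) ℝ :=
  ∑ i, pderiv i h * (f i + ∑ j, C (u j) * g i j)

/-- `ḣ(x,u)` evaluated at the state `x`. -/
noncomputable def HdotFun {n nu : ℕ} (h : MvPolynomial (Fin n) ℝ)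
    (f : Fin n → MvPolynomial (Fin n) ℝ) (g : Fin n → Fin nu → MvPolynomial (Fin n) ℝ)
    (x : Fin n → ℝ) (u : Fin nu → ℝ) : ℝ :=
  eval x (HdotPoly h f g u)

/-!
Evaluate the certificate at `x`: its first term `(1 + μ₀(x))(β⁻ - h(x))` is negative, so some
`μᵢ(x)(ḣ(x,uⁱ) + κ_h h(x))` is positive, and since `μᵢ(x) ≥ 0` the vertex `uⁱ` itself is an
admissible input.
-/

lemma IsSOS.eval_nonneg {n : ℕ} {p : MvPolynomial (Fin n) ℝ} (hp : IsSOS p)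
    (x : Fin n → ℝ) : 0 ≤ eval x p := by
  obtain ⟨N, q, rfl⟩ := hp
  simp only [map_sum, map_pow]
  exact Finset.sum_nonneg fun i _ => sq_nonneg _

lemma exists_pos_of_nonneg_add_sum_mul {ι R : Type*} [CommRing R] [LinearOrder R]
    [IsStrictOrderedRing R] (s : Finset ι) {a : R} {w c : ι → R} (ha : a < 0)
    (hw : ∀ i ∈ s, 0 ≤ w i) (h : 0 ≤ a + ∑ i ∈ s, w i * c i) : ∃ i ∈ s, 0 < c i := by
  have hsum : ∑ i ∈ s, (0 : R) < ∑ i ∈ s, w i * c i := by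
    rw [Finset.sum_const_zero]
    linarith
  obtain ⟨i, hi, hpos⟩ := Finset.exists_lt_of_sum_lt hsum
  exact ⟨i, hi, pos_of_mul_pos_right hpos (hw i hi)⟩

theorem cbf_s_procedure_sufficient_general {n nu m : ℕ}
    (h : MvPolynomial (Fin n) ℝ)
    (f : Fin n → MvPolynomial (Fin n) ℝ) (g : Fin n → Fin nu → MvPolynomial (Fin n) ℝ)
    (uvert : Fin m → Fin nu → ℝ)
    (κh βminus : ℝ)
    (mu0 : MvPolynomial (Fin n) ℝ) (mu : Fin m → MvPolynomial (Fin n) ℝ)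
    (hmu0 : IsSOS mu0) (hmu : ∀ i, IsSOS (mu i))
    (hmain : IsSOS ((1 + mu0) * (C βminus - h)
        + ∑ i, mu i * (HdotPoly h f g (uvert i) + C κh * h))) :
    ∀ x : Fin n → ℝ, eval x h > βminus →
      ∃ u ∈ convexHull ℝ (Set.range uvert), HdotFun h f g x u > -κh * eval x h := by
  intro x hx
  have hcert := hmain.eval_nonneg x
  simp only [map_add, map_mul, map_sub, map_one, eval_C, map_sum] at hcert
  have hfirst : (1 + eval x mu0) * (βminus - eval x h) < 0 :=
    mul_neg_of_pos_of_neg (by linarith [hmu0.eval_nonneg x]) (by linarith)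
  obtain ⟨i, -, hi⟩ := exists_pos_of_nonneg_add_sum_mul Finset.univ hfirst
    (fun i _ => (hmu i).eval_nonneg x) hcert
  exact ⟨uvert i, subset_convexHull ℝ _ (Set.mem_range_self i), by rw [HdotFun]; linarith⟩

theorem cbf_s_procedure_sufficient {n nu m : ℕ}
    (h : MvPolynomial (Fin n) ℝ)
    (f : Fin n → MvPolynomial (Fin n) ℝ) (g : Fin n → Fin nu → MvPolynomial (Fin n) ℝ)
    (uvert : Fin m → Fin nu → ℝ)
    (κh βminus : ℝ) (hκ : 0 < κh) (hβ : βminus < 0)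
    (mu0 : MvPolynomial (Fin n) ℝ) (mu : Fin m → MvPolynomial (Fin n) ℝ)
    (hmu0 : IsSOS mu0) (hmu : ∀ i, IsSOS (mu i))
    (hmain : IsSOS ((1 + mu0) * (C βminus - h)
        + ∑ i, mu i * (HdotPoly h f g (uvert i) + C κh * h))) :
    ∀ x : Fin n → ℝ, eval x h > βminus →
      ∃ u ∈ convexHull ℝ (Set.range uvert), HdotFun h f g x u > -κh * eval x h :=
  cbf_s_procedure_sufficient_general h f g uvert κh βminus mu0 mu hmu0 hmu hmain
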